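/- arXiv:2506.19345 — 2 statements merged into one kernel-verified Lean document; each statement's English description precedes it below -/
import Mathlib

section
/- In a school-choice market with common priorities, there is at most one stable matching: any two stable matchings μ and μ' assign every student the same outcome (the same school, or unmatched in both). -/
/-!
A school-choice market with common priorities.

* `D` : students, `H` : schools (both finite).
* `κ h` : capacity of school `h` (at least 1).
* `L d` : the finite set of schools acceptable to student `d`.
* `rank d` : student `d`'s preference ranking of schools; a smaller rank means a more
  preferred school.  It is injective on `L d`, so it induces a strict linear order on `L d`.
* `prio` : the common priority order on students, shared by all schools; a smaller value
  means higher priority.  It is injective, so it is a strict linear order on `D`.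

A matching assigns each student a school (`some h`) or leaves her unmatched (`none`).
-/

/-- `μ` is a matching: matched students get acceptable schools, and capacities are respected. -/
def IsMatching {D H : Type*} [Fintype D] [DecidableEq H]
    (L : D → Finset H) (κ : H → ℕ) (μ : D → Option H) : Prop :=
  (∀ d h, μ d = some h → h ∈ L d) ∧
  ∀ h, (Finset.univ.filter (fun d => μ d = some h)).card ≤ κ h

/-- The pair `(d, h)` blocks the matching `μ`: `h` is acceptable to `d`; `d` is unmatched or
strictly prefers `h` to her assigned school; and either `h` is not filled to capacity, or some
student assigned to `h` has strictly lower priority than `d`. -/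
def Blocks {D H : Type*} [Fintype D] [DecidableEq H]
    (L : D → Finset H) (rank : D → H → ℕ) (κ : H → ℕ) (prio : D → ℕ)
    (μ : D → Option H) (d : D) (h : H) : Prop :=
  h ∈ L d ∧
  (μ d = none ∨ ∃ h', μ d = some h' ∧ rank d h < rank d h') ∧
  ((Finset.univ.filter (fun d' => μ d' = some h)).card < κ h ∨
    ∃ d', μ d' = some h ∧ prio d < prio d')

/-- A matching is stable if no pair blocks it. -/
def IsStable {D H : Type*} [Fintype D] [DecidableEq H]
    (L : D → Finset H) (rank : D → H → ℕ) (κ : H → ℕ) (prio : D → ℕ)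
    (μ : D → Option H) : Prop :=
  IsMatching L κ μ ∧ ∀ d h, ¬ Blocks L rank κ prio μ d h


/-- Key lemma: if `μ` and `μ'` are stable, `d` is matched to `h` under `μ`, but under `μ'`
student `d` is not at `h` and would strictly prefer `h`, while all students with strictly
higher priority than `d` get the same assignments in both matchings, then `(d,h)` blocks
`μ'`, a contradiction. -/
lemma block_aux {D H : Type*} [Fintype D] [DecidableEq H]
    (L : D → Finset H) (rank : D → H → ℕ) (κ : H → ℕ) (prio : D → ℕ)
    (hprio : Function.Injective prio)
    (μ μ' : D → Option H)
    (hμ : IsStable L rank κ prio μ) (hμ' : IsStable L rank κ prio μ')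
    (d : D) (h : H)
    (hdh : μ d = some h)
    (hne : μ' d ≠ some h)
    (hpref : μ' d = none ∨ ∃ h', μ' d = some h' ∧ rank d h < rank d h')
    (IH : ∀ d', prio d' < prio d → μ d' = μ' d') : False := by
  classical
  apply hμ'.2 d h
  refine ⟨hμ.1.1 d h hdh, hpref, ?_⟩
  by_contra hc
  push_neg at hc
  obtain ⟨h1, h2⟩ := hc
  apply absurd h1
  push_neg
  have hsub : (Finset.univ.filter (fun d' => μ' d' = some h)) ⊆
      (Finset.univ.filter (fun d' => μ d' = some h)).erase d := by
    intro d' hd'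
    simp only [Finset.mem_filter, Finset.mem_univ, true_and] at hd'
    have hdd : d' ≠ d := fun e => hne (e ▸ hd')
    have hlt : prio d' < prio d :=
      lt_of_le_of_ne (h2 d' hd') (fun e => hdd (hprio e))
    have : μ d' = some h := (IH d' hlt).trans hd'
    exact Finset.mem_erase.mpr ⟨hdd, by simp [this]⟩
  have hdmem : d ∈ Finset.univ.filter (fun d' => μ d' = some h) := by simp [hdh]
  calc (Finset.univ.filter (fun d' => μ' d' = some h)).card
      ≤ ((Finset.univ.filter (fun d' => μ d' = some h)).erase d).card :=
        Finset.card_le_card hsub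
    _ < (Finset.univ.filter (fun d' => μ d' = some h)).card :=
        Finset.card_erase_lt_of_mem hdmem
    _ ≤ κ h := hμ.1.2 h

/-- In a school-choice market with common priorities there is at most one
stable matching: any two stable matchings assign every student the same outcome. -/
theorem unique_stable_matching
    {D H : Type*} [Fintype D] [Fintype H] [DecidableEq H]
    (κ : H → ℕ) (hκ : ∀ h, 1 ≤ κ h)
    (L : D → Finset H) (rank : D → H → ℕ)
    (hrank : ∀ d, ∀ h ∈ L d, ∀ h' ∈ L d, rank d h = rank d h' → h = h')
    (prio : D → ℕ) (hprio : Function.Injective prio)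
    (μ μ' : D → Option H)
    (hμ : IsStable L rank κ prio μ)
    (hμ' : IsStable L rank κ prio μ') :
    ∀ d, μ d = μ' d := by
  suffices Hn : ∀ n d, prio d = n → μ d = μ' d from fun d => Hn _ d rfl
  intro n
  induction n using Nat.strong_induction_on with
  | _ n IH =>
    intro d hd
    have IH' : ∀ d', prio d' < prio d → μ d' = μ' d' :=
      fun d' hlt => IH _ (hd ▸ hlt) d' rfl
    by_contra hneq
    rcases h1 : μ d with _ | h <;> rcases h2 : μ' d with _ | h'
    · exact hneq (h1.trans h2.symm)
    · exact block_aux L rank κ prio hprio μ' μ hμ' hμ d h' h2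
        (by simp [h1]) (Or.inl h1)
        (fun d' hlt => (IH' d' hlt).symm)
    · exact block_aux L rank κ prio hprio μ μ' hμ hμ' d h h1
        (fun e => hneq (h1.trans e.symm)) (Or.inl h2) IH'
    · have hhh : h ≠ h' := fun e => hneq (h1.trans (e ▸ h2.symm))
      have hL : h ∈ L d := hμ.1.1 d h h1
      have hL' : h' ∈ L d := hμ'.1.1 d h' h2
      have hrne : rank d h ≠ rank d h' := fun e => hhh (hrank d h hL h' hL' e)
      rcases hrne.lt_or_gt with hlt | hlt
      · exact block_aux L rank κ prio hprio μ μ' hμ hμ' d h h1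
          (fun e => hhh (Option.some_injective _ (h2.symm.trans e)).symm)
          (Or.inr ⟨h', h2, hlt⟩) IH'
      · exact block_aux L rank κ prio hprio μ' μ hμ' hμ d h' h2
          (fun e => hhh (Option.some_injective _ (h1.symm.trans e)))
          (Or.inr ⟨h, h1, hlt⟩) (fun d' hl => (IH' d' hl).symm)
end

section
/- Let κ, k be positive integers and let a ≥ 1, α ∈ (0,1], ψ ∈ (0,1], τ be reals with 0 ≤ τ ≤ α/4. Let X₁,…,X_m be independent {0,1}-valued random variables and set μ = Σᵢ P(Xᵢ = 1). Suppose μ ≥ 2κk(α−τ)ψ/(4a+1) and k ≥ (2+√2)(4a+1)/(2(α−τ)ψ). Then P(X₁ + ⋯ + X_m < κ) ≤ exp(−κk(α−τ)ψ/(2(4a+1))) ≤ exp(−3κkαψ/(8(4a+1))). -/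
open MeasureTheory ProbabilityTheory

set_option maxHeartbeats 1000000 in
/-- Let `κ, k` be positive integers and `a ≥ 1`, `α ∈ (0,1]`, `ψ ∈ (0,1]`,
`0 ≤ τ ≤ α/4` reals.  Let `X 0, …, X (m-1)` be independent `{0,1}`-valued random variables
and let `μ` be the sum of the probabilities `P(X i = 1)`.  If
`μ ≥ 2κk(α−τ)ψ/(4a+1)` and `k ≥ (2+√2)(4a+1)/(2(α−τ)ψ)`, then
`P(X 0 + ⋯ + X (m-1) < κ) ≤ exp(−κk(α−τ)ψ/(2(4a+1))) ≤ exp(−3κkαψ/(8(4a+1)))`. -/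
theorem hospital_fully_matched
    {Ω : Type*} [MeasurableSpace Ω] (P : Measure Ω) [IsProbabilityMeasure P]
    (κ k : ℕ) (hκ : 0 < κ) (hk : 0 < k)
    (a α ψ τ : ℝ) (ha : 1 ≤ a) (hα : α ∈ Set.Ioc (0:ℝ) 1) (hψ : ψ ∈ Set.Ioc (0:ℝ) 1)
    (hτ0 : 0 ≤ τ) (hτ : τ ≤ α / 4)
    (m : ℕ) (X : Fin m → Ω → ℝ)
    (hmeas : ∀ i, Measurable (X i))
    (hindep : iIndepFun (m := fun _ => Real.measurableSpace) X P)
    (h01 : ∀ i ω, X i ω = 0 ∨ X i ω = 1)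
    (μ : ℝ) (hμdef : μ = ∑ i, (P {ω | X i ω = 1}).toReal)
    (hμ : 2 * κ * k * (α - τ) * ψ / (4 * a + 1) ≤ μ)
    (hkbig : (2 + Real.sqrt 2) * (4 * a + 1) / (2 * (α - τ) * ψ) ≤ (k : ℝ)) :
    P {ω | (∑ i, X i ω) < (κ : ℝ)}
        ≤ ENNReal.ofReal (Real.exp (-(κ * k * (α - τ) * ψ) / (2 * (4 * a + 1)))) ∧
      Real.exp (-(κ * k * (α - τ) * ψ) / (2 * (4 * a + 1)))
        ≤ Real.exp (-(3 * κ * k * α * ψ) / (8 * (4 * a + 1))) := by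
  obtain ⟨hα0, hα1⟩ := hα
  obtain ⟨hψ0, hψ1⟩ := hψ
  have hd : (0:ℝ) < 4 * a + 1 := by linarith
  have hατ : (0:ℝ) < α - τ := by linarith
  have hκ1 : (1:ℝ) ≤ (κ:ℝ) := by exact_mod_cast hκ
  have hk1 : (1:ℝ) ≤ (k:ℝ) := by exact_mod_cast hk
  -- second conjunct
  have hconj2 : Real.exp (-(κ * k * (α - τ) * ψ) / (2 * (4 * a + 1)))
      ≤ Real.exp (-(3 * κ * k * α * ψ) / (8 * (4 * a + 1))) := by
    rw [Real.exp_le_exp, div_le_div_iff₀ (by positivity) (by positivity)]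
    have hκk : (1:ℝ) ≤ (κ:ℝ) * k := by nlinarith
    nlinarith [mul_pos (mul_pos (mul_pos (by linarith : (0:ℝ) < (κ:ℝ)*k) hψ0) hd) hd]
  refine ⟨?_, hconj2⟩
  -- basic facts about the X i
  have hX0 : ∀ i (ω : Ω), 0 ≤ X i ω := fun i ω => by rcases h01 i ω with h | h <;> simp [h]
  have hX1 : ∀ i (ω : Ω), X i ω ≤ 1 := fun i ω => by rcases h01 i ω with h | h <;> simp [h]
  set p : Fin m → ℝ := fun i => (P {ω | X i ω = 1}).toReal with hp
  have hp0 : ∀ i, 0 ≤ p i := fun i => ENNReal.toReal_nonneg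
  have hp1 : ∀ i, p i ≤ 1 := fun i => by
    simpa using ENNReal.toReal_mono ENNReal.one_ne_top (prob_le_one (μ := P) (s := _))
  -- integral of X i is p i
  have hXint : ∀ i, ∫ ω, X i ω ∂P = p i := by
    intro i
    have hs : MeasurableSet {ω | X i ω = 1} := by
      have : {ω | X i ω = 1} = X i ⁻¹' {1} := rfl
      rw [this]; exact (hmeas i) (measurableSet_singleton 1)
    have hrepr : X i = Set.indicator {ω | X i ω = 1} (fun _ => (1:ℝ)) := by
      funext ω
      rcases h01 i ω with h | h
      · simp [Set.indicator, h]
      · simp [Set.indicator, h]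
    rw [show (fun ω => X i ω) = X i from rfl, hrepr, integral_indicator_const _ hs]
    simp [hp, measureReal_def]
  have hXmeasInt : ∀ i, Integrable (X i) P := by
    intro i
    refine Integrable.mono' (integrable_const 1) (hmeas i).aestronglyMeasurable ?_
    exact Filter.Eventually.of_forall fun ω => by
      rw [Real.norm_eq_abs, abs_of_nonneg (hX0 i ω)]; exact hX1 i ω
  -- integrability of exp(-1 * X i)
  have hexpint : ∀ i, Integrable (fun ω => Real.exp (-1 * X i ω)) P := by
    intro i
    refine Integrable.mono' (integrable_const 1) ?_ ?_
    · exact (((hmeas i).const_mul (-1)).exp).aestronglyMeasurable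
    · exact Filter.Eventually.of_forall fun ω => by
        rw [Real.norm_eq_abs, abs_of_nonneg (Real.exp_pos _).le, Real.exp_le_one_iff]
        nlinarith [hX0 i ω]
  -- mgf of each X i at -1
  have hmgf : ∀ i, mgf (X i) P (-1) = 1 + (Real.exp (-1) - 1) * p i := by
    intro i
    have heq : (fun ω => Real.exp (-1 * X i ω))
        = fun ω => 1 + (Real.exp (-1) - 1) * X i ω := by
      funext ω
      rcases h01 i ω with h | h <;> simp [h] <;> ring
    rw [mgf, heq, integral_add (integrable_const 1) ((hXmeasInt i).const_mul _)]
    rw [integral_const, integral_const_mul, hXint i]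
    simp
  -- mgf of the sum
  have hsum_mgf : mgf (∑ i, X i) P (-1) = ∏ i, (1 + (Real.exp (-1) - 1) * p i) := by
    rw [hindep.mgf_sum hmeas]
    exact Finset.prod_congr rfl fun i _ => hmgf i
  -- bound the product by exp((e⁻¹-1) μ)
  have hfac0 : ∀ i : Fin m, (0:ℝ) ≤ 1 + (Real.exp (-1) - 1) * p i := by
    intro i
    nlinarith [hp0 i, hp1 i, (Real.exp_pos (-1)).le, Real.exp_le_one_iff.mpr (by norm_num : (-1:ℝ) ≤ 0)]
  have hprod : ∏ i, (1 + (Real.exp (-1) - 1) * p i) ≤ Real.exp ((Real.exp (-1) - 1) * μ) := by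
    rw [hμdef, Finset.mul_sum, Real.exp_sum]
    exact Finset.prod_le_prod (fun i _ => hfac0 i)
      (fun i _ => Real.add_one_le_exp _ |>.trans_eq' (by simp only [hp]; ring))
  -- integrability of exp(-1 * sum)
  have hSapp : (∑ i, X i) = fun ω => ∑ i, X i ω := by
    funext ω; exact Finset.sum_apply ω Finset.univ X
  have hSmeas : Measurable (∑ i, X i) := by
    rw [hSapp]; exact Finset.measurable_sum Finset.univ (fun i _ => hmeas i)
  have hsumint : Integrable (fun ω => Real.exp (-1 * (∑ i, X i) ω)) P := by
    refine Integrable.mono' (integrable_const 1) ?_ ?_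
    · exact ((hSmeas.const_mul (-1)).exp).aestronglyMeasurable
    · exact Filter.Eventually.of_forall fun ω => by
        rw [Real.norm_eq_abs, abs_of_nonneg (Real.exp_pos _).le, Real.exp_le_one_iff,
          Finset.sum_apply]
        have : (0:ℝ) ≤ ∑ i, X i ω := Finset.sum_nonneg fun i _ => hX0 i ω
        nlinarith
  -- Chernoff bound
  have hcher : (P {ω | (∑ i, X i) ω ≤ (κ:ℝ)}).toReal
      ≤ Real.exp (κ) * mgf (∑ i, X i) P (-1) := by
    have := measure_le_le_exp_mul_mgf (μ := P) (X := ∑ i, X i) (κ:ℝ)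
      (by norm_num : (-1:ℝ) ≤ 0) hsumint
    simpa [measureReal_def] using this
  -- key scalar inequalities
  have hsqrt2 : (1.414:ℝ) ≤ Real.sqrt 2 := by
    rw [show (1.414:ℝ) = Real.sqrt (1.414^2) by rw [Real.sqrt_sq (by norm_num)]]
    exact Real.sqrt_le_sqrt (by norm_num)
  have hexpinv : Real.exp (-1) ≤ 0.368 := by
    rw [Real.exp_neg]
    rw [inv_le_comm₀ (Real.exp_pos 1) (by norm_num)]
    calc (0.368:ℝ)⁻¹ ≤ 2.7182818283 := by norm_num
    _ ≤ Real.exp 1 := Real.exp_one_gt_d9.le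
  -- μ lower bounds
  set μ₀ : ℝ := 2 * κ * k * (α - τ) * ψ / (4 * a + 1) with hμ₀
  have hμ₀pos : 0 < μ₀ := by positivity
  have hκμ₀ : (2 + Real.sqrt 2) * κ ≤ μ₀ := by
    have h2 : (2 + Real.sqrt 2) * (4 * a + 1) ≤ (k:ℝ) * (2 * (α - τ) * ψ) := by
      rw [div_le_iff₀ (by positivity)] at hkbig
      linarith
    rw [hμ₀, le_div_iff₀ hd]
    nlinarith [Real.sqrt_nonneg 2]
  have hκμ : (2 + Real.sqrt 2) * κ ≤ μ := le_trans hκμ₀ hμ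
  have hμpos : 0 < μ := lt_of_lt_of_le hμ₀pos hμ
  -- the exponent inequality : κ + (e⁻¹ - 1) μ ≤ -μ₀/4
  have hexpo : (κ:ℝ) + (Real.exp (-1) - 1) * μ ≤ -(μ₀ / 4) := by
    have hκle : (κ:ℝ) ≤ μ / (2 + Real.sqrt 2) := by
      rw [le_div_iff₀ (by nlinarith [Real.sqrt_nonneg 2])]
      linarith [hκμ]
    have hmain : μ / (2 + Real.sqrt 2) + (Real.exp (-1) - 1) * μ ≤ -(μ / 4) := by
      rw [div_add' _ _ _ (by nlinarith [Real.sqrt_nonneg 2] : (2 + Real.sqrt 2) ≠ 0),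
        div_le_iff₀ (by nlinarith [Real.sqrt_nonneg 2])]
      have hsqrt2' : Real.sqrt 2 ≤ 1.415 := by
        rw [show (1.415:ℝ) = Real.sqrt (1.415^2) by rw [Real.sqrt_sq (by norm_num)]]
        exact Real.sqrt_le_sqrt (by norm_num)
      have hscal : 1 + (Real.exp (-1) - 1) * (2 + Real.sqrt 2) ≤ -((2 + Real.sqrt 2)/4) := by
        nlinarith [hsqrt2, hsqrt2', hexpinv, (Real.exp_pos (-1)).le]
      nlinarith [mul_le_mul_of_nonneg_left hscal hμpos.le]
    have : -(μ/4) ≤ -(μ₀/4) := by linarith [hμ]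
    linarith
  -- put it together
  have hfinal : (P {ω | (∑ i, X i ω) < (κ:ℝ)}).toReal
      ≤ Real.exp (-(κ * k * (α - τ) * ψ) / (2 * (4 * a + 1))) := by
    have hmono : P {ω | (∑ i, X i ω) < (κ:ℝ)} ≤ P {ω | (∑ i, X i) ω ≤ (κ:ℝ)} := by
      apply measure_mono
      intro ω hω
      simp only [Set.mem_setOf_eq, Finset.sum_apply] at *
      exact hω.le
    have h1 : (P {ω | (∑ i, X i ω) < (κ:ℝ)}).toReal
        ≤ (P {ω | (∑ i, X i) ω ≤ (κ:ℝ)}).toReal :=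
      ENNReal.toReal_mono (measure_ne_top _ _) hmono
    have h2 := h1.trans hcher
    have h3 : Real.exp (κ) * mgf (∑ i, X i) P (-1)
        ≤ Real.exp ((κ:ℝ) + (Real.exp (-1) - 1) * μ) := by
      rw [hsum_mgf, Real.exp_add]
      exact mul_le_mul_of_nonneg_left hprod (Real.exp_pos _).le
    have h4 : Real.exp ((κ:ℝ) + (Real.exp (-1) - 1) * μ)
        ≤ Real.exp (-(κ * k * (α - τ) * ψ) / (2 * (4 * a + 1))) := by
      rw [Real.exp_le_exp]
      have : -(κ * k * (α - τ) * ψ) / (2 * (4 * a + 1)) = -(μ₀ / 4) := by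
        rw [hμ₀]; field_simp; ring
      rw [this]
      exact hexpo
    exact h2.trans (h3.trans h4)
  rw [← ENNReal.ofReal_toReal (measure_ne_top P _)]
  exact ENNReal.ofReal_le_ofReal hfinal
end
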